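/- Let d, n ≥ 1 and let Q, L ≥ 1 be integers with T = QL. Let K ⊆ [0,1]^d be convex and downward-closed with 0 ∈ K, with ‖y‖ ≤ R for all y ∈ K. For each q ∈ {1,…,Q}, i ∈ {1,…,n} and k ∈ {1,…,L}, let v_{q,k}^i ∈ K, and define x_{q,1}^i = 0 and x_{q,k+1}^i = x_{q,k}^i + (1/L)·v_{q,k}^i ⊙ (1 − x_{q,k}^i), and set x_q^i = x_{q,L+1}^i. For each t ∈ {1,…,T} and j ∈ {1,…,n}, let f_t^j : ℝ^d → ℝ be continuous DR-submodular and nonnegative on X = [0,1]^d, differentiable on X with ‖∇f_t^j(x) − ∇f_t^j(y)‖ ≤ β‖x − y‖ and ‖∇f_t^j(x)‖ ≤ G for all x, y ∈ X. Write T_q = {(q−1)L+1, …, qL}. Then for every i ∈ {1,…,n} and every x ∈ K: Σ_{q=1}^{Q} Σ_{t ∈ T_q} ( (1/e)·Σ_{j=1}^n f_t^j(x) − Σ_{j=1}^n f_t^j(x_q^i) ) ≤ Σ_{k=1}^L (1 − 1/L)^{L−k} Σ_{q=1}^{Q} Σ_{j=1}^n ⟨ (1/L)·Σ_{t ∈ T_q}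 ∇f_t^j(x_{q,k}^j) ⊙ (x_{q,k}^j − 1), v_{q,k}^i − x ⟩ + 4(β + G)R · Σ_{k=1}^L Σ_{q=1}^{Q} Σ_{j=1}^n ‖v_{q,k}^j − v_{q,k}^i‖ + nβTR²/(2L). -/

import Mathlib

open MeasureTheory Finset

noncomputable section

/-- The unit cube `[0,1]^d` in `ℝ^d` (with Euclidean structure). -/
def cube (d : ℕ) : Set (EuclideanSpace ℝ (Fin d)) :=
  {x | ∀ i, x i ∈ Set.Icc (0 : ℝ) 1}

/-- Coordinatewise (Hadamard) product on `ℝ^d`. -/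
def had {d : ℕ} (x y : EuclideanSpace ℝ (Fin d)) : EuclideanSpace ℝ (Fin d) :=
  WithLp.toLp 2 (fun i => x i * y i)

/-- The all-ones vector in `ℝ^d`. -/
def onesV (d : ℕ) : EuclideanSpace ℝ (Fin d) := WithLp.toLp 2 (fun _ => 1)

/-- `K ⊆ ℝ^d` is downward closed (relative to the nonnegative orthant): together with any
`y ∈ K` it contains every `x` with `0 ≤ x ≤ y` coordinatewise. -/
def DownwardClosed (d : ℕ) (K : Set (EuclideanSpace ℝ (Fin d))) : Prop :=
  ∀ y ∈ K, ∀ x : EuclideanSpace ℝ (Fin d), (∀ i, 0 ≤ x i) → (∀ i, x i ≤ y i) → x ∈ K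

/-- `f` is continuous DR-submodular on the unit cube `[0,1]^d`. -/
def DRSubmodularOn (d : ℕ) (f : EuclideanSpace ℝ (Fin d) → ℝ) : Prop :=
  ∀ x y : EuclideanSpace ℝ (Fin d), x ∈ cube d → y ∈ cube d → (∀ i, x i ≤ y i) →
    ∀ (j : Fin d) (z : ℝ), 0 ≤ z →
      x + z • EuclideanSpace.single j (1 : ℝ) ∈ cube d →
      y + z • EuclideanSpace.single j (1 : ℝ) ∈ cube d →
      f (y + z • EuclideanSpace.single j (1 : ℝ)) - f y ≤
        f (x + z • EuclideanSpace.single j (1 : ℝ)) - f x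

/-!
On each block, learner `i`'s iterates form a Frank–Wolfe run with step `1/L` for every `f_t^j`.
A DR-submodular function is concave along nonnegative directions, so a step gains
`(1/L) ((1 - 1/L)^(k-1) f(x) - f(x_k))` up to the linear term `⟨∇f(x_k) ⊙ (x_k - 1), v_k - x⟩`
and a smoothness error `β R² / (2L²)`, the weight coming from `1 - x_k ≥ (1 - 1/L)^(k-1)`.
Unrolling the recursion and `(1 - 1/L)^(L-1) ≥ 1/e` give the bound with learner `i`'s own
iterates; replacing them in the gradients by learner `j`'s costs `(β + G) ‖x_k^i - x_k^j‖ · 2R`,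
and `‖x_k^i - x_k^j‖ ≤ (1/L) Σ_l ‖v_l^i - v_l^j‖`.
-/

open Set
open scoped InnerProductSpace

section Cube

variable {d : ℕ}

@[simp] lemma had_apply (x y : EuclideanSpace ℝ (Fin d)) (i : Fin d) : had x y i = x i * y i := rfl

@[simp] lemma onesV_apply (i : Fin d) : onesV d i = 1 := rfl

lemma add_smul_apply (x u : EuclideanSpace ℝ (Fin d)) (r : ℝ) (i : Fin d) :
    (x + r • u) i = x i + r * u i := rfl

lemma fw_step_apply (p v : EuclideanSpace ℝ (Fin d)) (c : ℝ) (i : Fin d) :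
    (p + c • had v (onesV d - p)) i = p i + c * (v i * (1 - p i)) := rfl

lemma convex_cube : Convex ℝ (cube d) := by
  intro x hx y hy a b ha hb hab i
  simpa only [PiLp.add_apply, PiLp.smul_apply, smul_eq_mul] using
    convex_Icc (0 : ℝ) 1 (hx i) (hy i) ha hb hab

lemma zero_mem_cube : (0 : EuclideanSpace ℝ (Fin d)) ∈ cube d := fun _ => by simp

lemma onesV_mem_cube : onesV d ∈ cube d := fun _ => by simp

lemma add_smul_mem_cube {x u : EuclideanSpace ℝ (Fin d)} {T r : ℝ} (hT : 0 < T) (hx : x ∈ cube d)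
    (hxu : x + T • u ∈ cube d) (hr : r ∈ Icc 0 T) : x + r • u ∈ cube d := by
  have := convex_cube.add_smul_mem hx hxu ⟨div_nonneg hr.1 hT.le, (div_le_one hT).2 hr.2⟩
  rwa [smul_smul, div_mul_cancel₀ r hT.ne'] at this

lemma add_smul_single_mem_cube {w : EuclideanSpace ℝ (Fin d)} (hw : w ∈ cube d) {j : Fin d}
    {r : ℝ} (hr : 0 ≤ r) (hwr : w j + r ≤ 1) :
    w + r • EuclideanSpace.single j (1 : ℝ) ∈ cube d := by
  intro i
  by_cases hij : i = j
  · subst hij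
    simpa using ⟨add_nonneg (hw i).1 hr, hwr⟩
  · simpa [PiLp.single_apply, hij] using hw i

lemma fw_step_mem_cube {p v : EuclideanSpace ℝ (Fin d)} {c : ℝ} (hp : p ∈ cube d)
    (hv : v ∈ cube d) (hc : c ∈ Icc (0 : ℝ) 1) : p + c • had v (onesV d - p) ∈ cube d := fun i => by
  have hp := hp i; have hv := hv i
  rw [fw_step_apply]
  simp only [Set.mem_Icc] at hp hv ⊢
  constructor
  · nlinarith [mul_nonneg hc.1 (mul_nonneg hv.1 (sub_nonneg.2 hp.2))]
  · nlinarith [mul_le_mul hc.2 hv.2 hv.1 zero_le_one, sub_nonneg.2 hp.2]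

lemma inv_natCast_mem_Icc {L : ℕ} (hL : 1 ≤ L) : (L : ℝ)⁻¹ ∈ Icc (0 : ℝ) 1 :=
  ⟨inv_nonneg.2 L.cast_nonneg, inv_le_one_of_one_le₀ (by exact_mod_cast hL)⟩

lemma one_sub_one_div_mem_Icc (L : ℕ) : 1 - 1 / (L : ℝ) ∈ Icc (0 : ℝ) 1 := by
  rcases L.eq_zero_or_pos with rfl | hL
  · simp
  have := inv_natCast_mem_Icc hL
  rw [one_div]
  exact ⟨sub_nonneg.2 this.2, sub_le_self 1 this.1⟩

lemma abs_one_sub_le_one {t : ℝ} (ht : t ∈ Icc (0 : ℝ) 1) : |1 - t| ≤ 1 :=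
  abs_le.2 ⟨by linarith [ht.2], by linarith [ht.1]⟩

lemma norm_le_norm_of_abs_apply_le {u w : EuclideanSpace ℝ (Fin d)} (h : ∀ i, |u i| ≤ |w i|) :
    ‖u‖ ≤ ‖w‖ := by
  simp only [EuclideanSpace.norm_eq, Real.norm_eq_abs]
  exact Real.sqrt_le_sqrt (Finset.sum_le_sum fun i _ => pow_le_pow_left₀ (abs_nonneg _) (h i) 2)

lemma norm_had_le_of_abs_le_one (u : EuclideanSpace ℝ (Fin d)) {w : EuclideanSpace ℝ (Fin d)}
    (hw : ∀ i, |w i| ≤ 1) : ‖had u w‖ ≤ ‖u‖ :=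
  norm_le_norm_of_abs_apply_le fun i => by
    rw [had_apply, abs_mul]
    exact mul_le_of_le_one_right (abs_nonneg _) (hw i)

lemma norm_had_le (u w : EuclideanSpace ℝ (Fin d)) : ‖had u w‖ ≤ ‖u‖ * ‖w‖ := by
  rw [← abs_norm u, ← Real.norm_eq_abs, ← norm_smul]
  refine norm_le_norm_of_abs_apply_le fun i => ?_
  rw [had_apply, PiLp.smul_apply, smul_eq_mul, abs_mul, abs_mul, abs_norm]
  exact mul_le_mul_of_nonneg_right (PiLp.norm_apply_le u i) (abs_nonneg _)

lemma inner_eq_sum_mul (u w : EuclideanSpace ℝ (Fin d)) : ⟪u, w⟫_ℝ = ∑ i, u i * w i := by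
  simp [PiLp.inner_apply, mul_comm]

lemma inner_had_one_sub_eq (g p v z : EuclideanSpace ℝ (Fin d)) :
    ⟪g, had v (onesV d - p)⟫_ℝ = ⟪g, had z (onesV d - p)⟫_ℝ - ⟪had g (p - onesV d), v - z⟫_ℝ := by
  simp only [inner_eq_sum_mul, ← Finset.sum_sub_distrib]
  refine Finset.sum_congr rfl fun i _ => ?_
  simp only [had_apply, PiLp.sub_apply, onesV_apply]
  ring

end Cube

section Gradient

variable {F : Type*} [NormedAddCommGroup F] [InnerProductSpace ℝ F] [CompleteSpace F]
  {f : F → ℝ} {f' : F → F} {s : Set F}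

lemma HasGradientWithinAt.hasDerivWithinAt_comp_add_smul {g x u : F} {I : Set ℝ} {t : ℝ}
    (hf : HasGradientWithinAt f g s (x + t • u)) (hI : MapsTo (fun r : ℝ => x + r • u) I s) :
    HasDerivWithinAt (fun r : ℝ => f (x + r • u)) ⟪g, u⟫_ℝ I t := by
  have hline : HasDerivWithinAt (fun r : ℝ => x + r • u) u I t := by
    simpa using ((hasDerivWithinAt_id t I).smul_const u).const_add x
  exact hf.hasFDerivWithinAt.comp_hasDerivWithinAt t hline hI

lemma quadratic_lower_bound_of_lipschitz_gradient {β : ℝ} (hs : Convex ℝ s)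
    (hgrad : ∀ y ∈ s, HasGradientWithinAt f (f' y) s y)
    (hlip : ∀ y ∈ s, ∀ y' ∈ s, ‖f' y - f' y'‖ ≤ β * ‖y - y'‖) {x y : F} (hx : x ∈ s) (hy : y ∈ s) :
    f x + ⟪f' x, y - x⟫_ℝ - β / 2 * ‖y - x‖ ^ 2 ≤ f y := by
  set u := y - x
  have hmaps : MapsTo (fun r : ℝ => x + r • u) (Icc 0 1) s := fun r hr =>
    hs.add_smul_sub_mem hx hy hr
  have hφ : ∀ t ∈ Icc (0 : ℝ) 1, HasDerivWithinAt (fun r => f (x + r • u))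
      ⟪f' (x + t • u), u⟫_ℝ (Icc 0 1) t := fun t ht =>
    (hgrad _ (hmaps ht)).hasDerivWithinAt_comp_add_smul hmaps
  let ψ : ℝ → ℝ := fun r => f (x + r • u) - ⟪f' x, u⟫_ℝ * r + β / 2 * r ^ 2 * ‖u‖ ^ 2
  let ψ' : ℝ → ℝ := fun t => ⟪f' (x + t • u), u⟫_ℝ - ⟪f' x, u⟫_ℝ + β * t * ‖u‖ ^ 2
  have hψ : ∀ t ∈ Icc (0 : ℝ) 1, HasDerivWithinAt ψ (ψ' t) (Icc 0 1) t := fun t ht => by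
    have := (((hφ t ht).sub ((hasDerivWithinAt_id t _).const_mul ⟪f' x, u⟫_ℝ)).add
      (((hasDerivWithinAt_pow 2 t (s := Icc 0 1)).const_mul (β / 2)).mul_const (‖u‖ ^ 2)))
    exact this.congr_deriv (by simp only [ψ', Nat.cast_ofNat, Nat.add_one_sub_one, pow_one]; ring)
  have hψ' : ∀ t ∈ Ioo (0 : ℝ) 1, 0 ≤ ψ' t := fun t ht => by
    have hdiff : x - (x + t • u) = -(t • u) := by abel
    have hle : ⟪f' x - f' (x + t • u), u⟫_ℝ ≤ β * t * ‖u‖ ^ 2 :=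
      calc ⟪f' x - f' (x + t • u), u⟫_ℝ ≤ ‖f' x - f' (x + t • u)‖ * ‖u‖ := real_inner_le_norm _ _
        _ ≤ β * ‖x - (x + t • u)‖ * ‖u‖ := by
          gcongr
          exact hlip x hx _ (hmaps (Ioo_subset_Icc_self ht))
        _ = β * t * ‖u‖ ^ 2 := by
          rw [hdiff, norm_neg, norm_smul, Real.norm_of_nonneg ht.1.le]
          ring
    rw [inner_sub_left] at hle
    simp only [ψ']
    linarith
  have hmono : MonotoneOn ψ (Icc 0 1) := monotoneOn_of_hasDerivWithinAt_nonneg (convex_Icc 0 1)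
    (fun t ht => (hψ t ht).continuousWithinAt)
    (fun t ht => (hψ t (interior_subset ht)).mono interior_subset)
    (fun t ht => hψ' t (by rwa [interior_Icc] at ht))
  have h01 := hmono (left_mem_Icc.2 zero_le_one) (right_mem_Icc.2 zero_le_one) zero_le_one
  simp only [ψ, zero_smul, add_zero, one_smul, add_sub_cancel, u] at h01
  linarith

end Gradient

lemma nonneg_of_lipschitz_on_cube {d : ℕ} (hd : 1 ≤ d)
    {g : EuclideanSpace ℝ (Fin d) → EuclideanSpace ℝ (Fin d)} {β : ℝ}
    (hlip : ∀ y ∈ cube d, ∀ y' ∈ cube d, ‖g y - g y'‖ ≤ β * ‖y - y'‖) : 0 ≤ β := by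
  have hpos : 0 < ‖onesV d - 0‖ := norm_pos_iff.2 fun h => by
    simpa using congrArg (· ⟨0, hd⟩) h
  exact nonneg_of_mul_nonneg_left
    ((norm_nonneg _).trans (hlip _ onesV_mem_cube _ zero_mem_cube)) hpos

section DRSubmodular

variable {d : ℕ} {f : EuclideanSpace ℝ (Fin d) → ℝ}
  {f' : EuclideanSpace ℝ (Fin d) → EuclideanSpace ℝ (Fin d)}

lemma DRSubmodularOn.grad_apply_antitone (hsub : DRSubmodularOn d f)
    (hgrad : ∀ y ∈ cube d, HasGradientWithinAt f (f' y) (cube d) y)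
    {x y : EuclideanSpace ℝ (Fin d)} (hx : x ∈ cube d) (hy : y ∈ cube d) (hxy : ∀ i, x i ≤ y i)
    {j : Fin d} (hyj : y j < 1) : f' y j ≤ f' x j := by
  set e := EuclideanSpace.single j (1 : ℝ)
  set ε := 1 - y j
  have hmaps : ∀ w ∈ cube d, w j ≤ y j → MapsTo (fun r : ℝ => w + r • e) (Icc 0 ε) (cube d) :=
    fun w hw hwj r hr => add_smul_single_mem_cube hw hr.1 (by linarith [hr.2])
  have hderiv : ∀ w ∈ cube d, w j ≤ y j →
      HasDerivWithinAt (fun r : ℝ => f (w + r • e)) (f' w j) (Icc 0 ε) 0 := fun w hw hwj => by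
    have := (hgrad (w + (0 : ℝ) • e) (by simpa using hw)).hasDerivWithinAt_comp_add_smul
      (hmaps w hw hwj)
    simpa [e, EuclideanSpace.inner_single_right] using this
  have hmin : IsMinOn (fun r : ℝ => f (x + r • e) - f (y + r • e)) (Icc 0 ε) 0 := fun r hr => by
    have := hsub x y hx hy hxy j r hr.1 (hmaps x hx (hxy j) hr) (hmaps y hy le_rfl hr)
    simp only [mem_ofPred_eq, zero_smul, add_zero]
    linarith
  have hε : ε ∈ posTangentConeAt (Icc 0 ε) 0 :=
    mem_posTangentConeAt_of_segment_subset (by rw [zero_add, segment_eq_Icc (sub_nonneg.2 hyj.le)])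
  have := hmin.localize.hasFDerivWithinAt_nonneg
    ((hderiv x hx (hxy j)).sub (hderiv y hy le_rfl)).hasFDerivWithinAt hε
  rw [ContinuousLinearMap.toSpanSingleton_apply, smul_eq_mul] at this
  nlinarith [sub_pos.2 hyj]

lemma DRSubmodularOn.inner_grad_antitone (hsub : DRSubmodularOn d f)
    (hgrad : ∀ y ∈ cube d, HasGradientWithinAt f (f' y) (cube d) y)
    {x y u : EuclideanSpace ℝ (Fin d)} (hx : x ∈ cube d) (hy : y ∈ cube d) (hxy : ∀ i, x i ≤ y i)
    (hu : ∀ i, 0 ≤ u i) (hyu : ∀ i, 0 < u i → y i < 1) : ⟪f' y, u⟫_ℝ ≤ ⟪f' x, u⟫_ℝ := by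
  rw [inner_eq_sum_mul, inner_eq_sum_mul]
  refine Finset.sum_le_sum fun i _ => ?_
  rcases (hu i).eq_or_lt with hui | hui
  · simp [← hui]
  · exact mul_le_mul_of_nonneg_right (hsub.grad_apply_antitone hgrad hx hy hxy (hyu i hui)) hui.le

lemma DRSubmodularOn.concaveOn_add_smul (hsub : DRSubmodularOn d f)
    (hgrad : ∀ y ∈ cube d, HasGradientWithinAt f (f' y) (cube d) y)
    {x u : EuclideanSpace ℝ (Fin d)} {T : ℝ} (hT : 0 < T) (hx : x ∈ cube d)
    (hu : ∀ i, 0 ≤ u i) (hxu : x + T • u ∈ cube d) :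
    ConcaveOn ℝ (Icc 0 T) (fun r => f (x + r • u)) := by
  have hmaps : MapsTo (fun r : ℝ => x + r • u) (Icc 0 T) (cube d) := fun _ =>
    add_smul_mem_cube hT hx hxu
  have hφ : ∀ t ∈ Icc 0 T, HasDerivWithinAt (fun r => f (x + r • u)) ⟪f' (x + t • u), u⟫_ℝ
      (Icc 0 T) t := fun t ht =>
    (hgrad _ (hmaps ht)).hasDerivWithinAt_comp_add_smul hmaps
  have hφ' : ∀ t ∈ interior (Icc 0 T),
      HasDerivAt (fun r => f (x + r • u)) ⟪f' (x + t • u), u⟫_ℝ t :=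
    fun t ht => (hφ t (interior_subset ht)).hasDerivAt (mem_interior_iff_mem_nhds.1 ht)
  refine AntitoneOn.concaveOn_of_deriv (convex_Icc 0 T) (fun t ht => (hφ t ht).continuousWithinAt)
    (fun t ht => (hφ' t ht).differentiableAt.differentiableWithinAt) fun a ha b hb hab => ?_
  rw [(hφ' a ha).deriv, (hφ' b hb).deriv]
  rw [interior_Icc] at ha hb
  refine hsub.inner_grad_antitone hgrad (hmaps (Ioo_subset_Icc_self ha))
    (hmaps (Ioo_subset_Icc_self hb)) (fun i => ?_) hu (fun i hui => ?_)
  · simp only [add_smul_apply]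
    nlinarith [hu i]
  · have := (hxu i).2
    simp only [add_smul_apply] at this ⊢
    nlinarith [hb.2]

lemma DRSubmodularOn.sub_le_inner_grad (hsub : DRSubmodularOn d f)
    (hgrad : ∀ y ∈ cube d, HasGradientWithinAt f (f' y) (cube d) y)
    {x u : EuclideanSpace ℝ (Fin d)} (hx : x ∈ cube d) (hu : ∀ i, 0 ≤ u i) (hxu : x + u ∈ cube d) :
    f (x + u) - f x ≤ ⟪f' x, u⟫_ℝ := by
  rw [← one_smul ℝ u] at hxu
  have hderiv : HasDerivWithinAt (fun r : ℝ => f (x + r • u)) ⟪f' x, u⟫_ℝ (Icc 0 1) 0 := by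
    simpa using (hgrad (x + (0 : ℝ) • u) (by simpa using hx)).hasDerivWithinAt_comp_add_smul
      fun _ => add_smul_mem_cube one_pos hx hxu
  have hconc := hsub.concaveOn_add_smul hgrad one_pos hx hu hxu
  simpa [slope_def_field] using hconc.slope_le_of_hasDerivWithinAt
    (left_mem_Icc.2 zero_le_one) (right_mem_Icc.2 zero_le_one) one_pos hderiv

lemma DRSubmodularOn.one_sub_mul_le (hsub : DRSubmodularOn d f)
    (hgrad : ∀ y ∈ cube d, HasGradientWithinAt f (f' y) (cube d) y)
    (hnonneg : ∀ y ∈ cube d, 0 ≤ f y) {x w : EuclideanSpace ℝ (Fin d)} {m : ℝ}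
    (hx : x ∈ cube d) (hm : m ∈ Icc (0 : ℝ) 1) (hxw : ∀ i, x i ≤ w i)
    (hwx : ∀ i, w i - x i ≤ m * (1 - x i)) : (1 - m) * f x ≤ f w := by
  rcases hm.1.eq_or_lt with rfl | hm0
  · obtain rfl : w = x := by
      ext i
      exact le_antisymm (by linarith [hwx i]) (hxw i)
    simp
  -- Use concavity on the segment from `x` through `w` to `x + m⁻¹ • (w - x)`, and `f ≥ 0` there.
  set u := w - x
  have hend : x + m⁻¹ • u ∈ cube d := fun i => by
    have hxi := hx i
    have hui : m⁻¹ * u i ≤ 1 - x i := by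
      rw [inv_mul_le_iff₀ hm0]
      exact hwx i
    simp only [add_smul_apply, Set.mem_Icc] at hxi ⊢
    constructor <;> nlinarith [hxw i, inv_pos.2 hm0, hxi.1, show u i = w i - x i from rfl]
  have hconc := hsub.concaveOn_add_smul hgrad (inv_pos.2 hm0) hx (fun i => by
    simpa [u] using hxw i) hend
  have := hconc.2 (left_mem_Icc.2 (inv_pos.2 hm0).le) (right_mem_Icc.2 (inv_pos.2 hm0).le)
    (sub_nonneg.2 hm.2) hm0.le (sub_add_cancel 1 m)
  have hfar := hnonneg _ hend
  simp only [smul_eq_mul, mul_zero, zero_add, zero_smul, add_zero,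
    mul_inv_cancel₀ hm0.ne', one_smul, u, add_sub_cancel] at this
  nlinarith

lemma DRSubmodularOn.le_apply_fw_step (hsub : DRSubmodularOn d f)
    (hgrad : ∀ y ∈ cube d, HasGradientWithinAt f (f' y) (cube d) y)
    (hnonneg : ∀ y ∈ cube d, 0 ≤ f y) {β : ℝ} (hβ : 0 ≤ β)
    (hlip : ∀ y ∈ cube d, ∀ y' ∈ cube d, ‖f' y - f' y'‖ ≤ β * ‖y - y'‖)
    {p v z : EuclideanSpace ℝ (Fin d)} {a c R : ℝ} (hp : p ∈ cube d) (hv : v ∈ cube d)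
    (hz : z ∈ cube d) (hvR : ‖v‖ ≤ R) (hc : c ∈ Icc (0 : ℝ) 1) (ha : a ∈ Icc (0 : ℝ) 1)
    (hpa : ∀ i, p i ≤ 1 - a) :
    (1 - c) * f p + c * a * f z - c * ⟪had (f' p) (p - onesV d), v - z⟫_ℝ - β * c ^ 2 * R ^ 2 / 2
      ≤ f (p + c • had v (onesV d - p)) := by
  set δ := c • had v (onesV d - p)
  set u := had z (onesV d - p)
  have hpu : p + u ∈ cube d := by
    simpa [u] using fw_step_mem_cube hp hz (right_mem_Icc.2 zero_le_one)
  have hu : ∀ i, 0 ≤ u i := fun i => mul_nonneg (hz i).1 (sub_nonneg.2 (hp i).2)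
  have hlower : a * f z ≤ f (p + u) := by
    have := hsub.one_sub_mul_le hgrad hnonneg (m := 1 - a) (w := p + u) hz
      ⟨sub_nonneg.2 ha.2, sub_le_self 1 ha.1⟩ (fun i => ?_) (fun i => ?_)
    · simpa using this
    all_goals
      have := mul_le_mul_of_nonneg_right (hpa i) (sub_nonneg.2 (hz i).2)
      simp only [PiLp.add_apply, u, had_apply, PiLp.sub_apply, onesV_apply]
      nlinarith [(hp i).1, (hz i).2]
  have hfo := hsub.sub_le_inner_grad hgrad hp hu hpu
  have hsm := quadratic_lower_bound_of_lipschitz_gradient convex_cube hgrad hlip hp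
    (fw_step_mem_cube hp hv hc)
  rw [add_sub_cancel_left] at hsm
  have hδ : ‖δ‖ ^ 2 ≤ (c * R) ^ 2 := by
    refine pow_le_pow_left₀ (norm_nonneg _) ?_ 2
    rw [norm_smul, Real.norm_of_nonneg hc.1]
    refine mul_le_mul_of_nonneg_left ((norm_had_le_of_abs_le_one v fun i => ?_).trans hvR) hc.1
    exact abs_one_sub_le_one (hp i)
  have hinner : ⟪f' p, δ⟫_ℝ = c * (⟪f' p, u⟫_ℝ - ⟪had (f' p) (p - onesV d), v - z⟫_ℝ) := by
    rw [real_inner_smul_right, inner_had_one_sub_eq _ p v z]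
  have hgain := mul_le_mul_of_nonneg_left (by linarith : a * f z - f p ≤ ⟪f' p, u⟫_ℝ) hc.1
  nlinarith [mul_le_mul_of_nonneg_left hδ hβ]

end DRSubmodular

section FrankWolfeIterates

variable {d : ℕ}

lemma norm_fw_step_sub_le {p p' v v' : EuclideanSpace ℝ (Fin d)} {c : ℝ} (hp : p ∈ cube d)
    (hv' : v' ∈ cube d) (hc : c ∈ Icc (0 : ℝ) 1) :
    ‖(p + c • had v (onesV d - p)) - (p' + c • had v' (onesV d - p'))‖
      ≤ ‖p - p'‖ + c * ‖v - v'‖ := by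
  have hdecomp : (p + c • had v (onesV d - p)) - (p' + c • had v' (onesV d - p'))
      = had (p - p') (onesV d - c • v') + c • had (v - v') (onesV d - p) := by
    ext i
    simp only [PiLp.add_apply, PiLp.sub_apply, PiLp.smul_apply, had_apply, onesV_apply, smul_eq_mul]
    ring
  rw [hdecomp]
  refine (norm_add_le _ _).trans (add_le_add ?_ ?_)
  · refine norm_had_le_of_abs_le_one _ fun i => abs_one_sub_le_one ?_
    exact ⟨mul_nonneg hc.1 (hv' i).1, mul_le_one₀ hc.2 (hv' i).1 (hv' i).2⟩
  · rw [norm_smul, Real.norm_of_nonneg hc.1]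
    exact mul_le_mul_of_nonneg_left
      (norm_had_le_of_abs_le_one _ fun i => abs_one_sub_le_one (hp i)) hc.1

variable {c : ℝ} {N : ℕ} {v p : ℕ → EuclideanSpace ℝ (Fin d)}

lemma fw_iterate_apply_bounds (hc : c ∈ Icc (0 : ℝ) 1) (hv : ∀ k, 1 ≤ k → k ≤ N → v k ∈ cube d)
    (hp1 : p 1 = 0) (hrec : ∀ k, 1 ≤ k → k ≤ N → p (k + 1) = p k + c • had (v k) (onesV d - p k))
    {k : ℕ} (hk : 1 ≤ k) (hkN : k ≤ N + 1) (i : Fin d) :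
    0 ≤ p k i ∧ p k i ≤ 1 - (1 - c) ^ (k - 1) := by
  induction k, hk using Nat.le_induction with
  | base => simp [hp1]
  | succ k hk ih =>
    obtain ⟨h0, h1⟩ := ih (by omega)
    have hvi := hv k hk (by omega) i
    have hpow : 0 ≤ (1 - c) ^ (k - 1) := pow_nonneg (sub_nonneg.2 hc.2) _
    have hsucc : (1 - c) ^ (k + 1 - 1) = (1 - c) ^ (k - 1) * (1 - c) := by
      rw [← pow_succ]; congr 1; omega
    rw [hrec k hk (by omega), fw_step_apply, hsucc]
    constructor
    · nlinarith [mul_nonneg hc.1 hvi.1]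
    · have hcv : c * v k i ≤ 1 := mul_le_one₀ hc.2 hvi.1 hvi.2
      nlinarith [mul_nonneg (sub_nonneg.2 h1) (sub_nonneg.2 hcv),
        mul_nonneg hpow (mul_nonneg hc.1 (sub_nonneg.2 hvi.2))]

lemma fw_iterate_mem_cube (hc : c ∈ Icc (0 : ℝ) 1) (hv : ∀ k, 1 ≤ k → k ≤ N → v k ∈ cube d)
    (hp1 : p 1 = 0) (hrec : ∀ k, 1 ≤ k → k ≤ N → p (k + 1) = p k + c • had (v k) (onesV d - p k))
    {k : ℕ} (hk : 1 ≤ k) (hkN : k ≤ N + 1) : p k ∈ cube d := fun i => by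
  have := fw_iterate_apply_bounds hc hv hp1 hrec hk hkN i
  exact ⟨this.1, this.2.trans (sub_le_self 1 (pow_nonneg (sub_nonneg.2 hc.2) _))⟩

lemma norm_fw_iterate_sub_le {v' p' : ℕ → EuclideanSpace ℝ (Fin d)} (hc : c ∈ Icc (0 : ℝ) 1)
    (hv : ∀ k, 1 ≤ k → k ≤ N → v k ∈ cube d) (hv' : ∀ k, 1 ≤ k → k ≤ N → v' k ∈ cube d)
    (hp1 : p 1 = 0) (hp1' : p' 1 = 0)
    (hrec : ∀ k, 1 ≤ k → k ≤ N → p (k + 1) = p k + c • had (v k) (onesV d - p k))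
    (hrec' : ∀ k, 1 ≤ k → k ≤ N → p' (k + 1) = p' k + c • had (v' k) (onesV d - p' k))
    {k : ℕ} (hk : 1 ≤ k) (hkN : k ≤ N + 1) :
    ‖p k - p' k‖ ≤ c * ∑ l ∈ Finset.Ico 1 k, ‖v l - v' l‖ := by
  induction k, hk using Nat.le_induction with
  | base => simp [hp1, hp1']
  | succ k hk ih =>
    rw [hrec k hk (by omega), hrec' k hk (by omega), Finset.sum_Ico_succ_top hk, mul_add]
    exact (norm_fw_step_sub_le (fw_iterate_mem_cube hc hv hp1 hrec hk (by omega))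
      (hv' k hk (by omega)) hc).trans (by linarith [ih (by omega)])

end FrankWolfeIterates

lemma sum_pow_mul_le_of_mul_add_le {a b : ℕ → ℝ} {r : ℝ} (hr : 0 ≤ r) (ha : 0 ≤ a 1) {N : ℕ}
    (hstep : ∀ k, 1 ≤ k → k ≤ N → r * a k + b k ≤ a (k + 1)) :
    ∑ k ∈ Finset.Icc 1 N, r ^ (N - k) * b k ≤ a (N + 1) := by
  induction N with
  | zero => simpa using ha
  | succ N ih =>
    have hsum : ∑ k ∈ Finset.Icc 1 (N + 1), r ^ (N + 1 - k) * b k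
        = r * ∑ k ∈ Finset.Icc 1 N, r ^ (N - k) * b k + b (N + 1) := by
      rw [Finset.sum_Icc_succ_top (by omega), Nat.sub_self, pow_zero, one_mul, Finset.mul_sum]
      congr 1
      refine Finset.sum_congr rfl fun k hk => ?_
      rw [Nat.sub_add_comm (Finset.mem_Icc.1 hk).2, pow_succ]
      ring
    rw [hsum]
    linarith [mul_le_mul_of_nonneg_left (ih fun k hk hkN => hstep k hk (by omega)) hr,
      hstep (N + 1) (by omega) le_rfl]

lemma sum_Icc_pow_sub_mul_pow_sub_one (r : ℝ) (L : ℕ) :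
    ∑ k ∈ Finset.Icc 1 L, r ^ (L - k) * r ^ (k - 1) = L * r ^ (L - 1) := by
  rw [Finset.sum_congr rfl fun k hk => show r ^ (L - k) * r ^ (k - 1) = r ^ (L - 1) by
    rw [← pow_add]; congr 1; grind]
  simp

lemma one_div_exp_one_le_one_sub_one_div_pow (L : ℕ) :
    1 / Real.exp 1 ≤ (1 - 1 / (L : ℝ)) ^ (L - 1) := by
  rcases Nat.lt_or_ge L 2 with hL | hL
  · interval_cases L <;> simp [inv_le_one_iff₀]
  obtain ⟨m, rfl⟩ : ∃ m, L = m + 1 := ⟨L - 1, by omega⟩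
  have hm : (0 : ℝ) < m := by exact_mod_cast (by omega : 0 < m)
  have hbase : Real.exp (-(1 / m)) ≤ 1 - 1 / ((m + 1 : ℕ) : ℝ) := by
    rw [Real.exp_neg, show 1 - 1 / ((m + 1 : ℕ) : ℝ) = (1 + 1 / (m : ℝ))⁻¹ by
      push_cast; field_simp; ring]
    exact inv_anti₀ (by positivity) (by linarith [Real.add_one_le_exp (1 / m)])
  calc 1 / Real.exp 1 = Real.exp (-(1 / m)) ^ m := by
        rw [← Real.exp_nat_mul, mul_neg, mul_one_div_cancel hm.ne', Real.exp_neg, one_div]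
    _ ≤ _ := by simpa using pow_le_pow_left₀ (Real.exp_pos _).le hbase m

section FrankWolfeBound

variable {d : ℕ} {f : EuclideanSpace ℝ (Fin d) → ℝ}
  {f' : EuclideanSpace ℝ (Fin d) → EuclideanSpace ℝ (Fin d)}

lemma DRSubmodularOn.frank_wolfe_bound (hsub : DRSubmodularOn d f)
    (hgrad : ∀ y ∈ cube d, HasGradientWithinAt f (f' y) (cube d) y)
    (hnonneg : ∀ y ∈ cube d, 0 ≤ f y) {β : ℝ} (hβ : 0 ≤ β)
    (hlip : ∀ y ∈ cube d, ∀ y' ∈ cube d, ‖f' y - f' y'‖ ≤ β * ‖y - y'‖)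
    {L : ℕ} (hL : 1 ≤ L) {R : ℝ} {v p : ℕ → EuclideanSpace ℝ (Fin d)} {z : EuclideanSpace ℝ (Fin d)}
    (hv : ∀ k, 1 ≤ k → k ≤ L → v k ∈ cube d) (hvR : ∀ k, 1 ≤ k → k ≤ L → ‖v k‖ ≤ R)
    (hz : z ∈ cube d) (hp1 : p 1 = 0)
    (hrec : ∀ k, 1 ≤ k → k ≤ L → p (k + 1) = p k + (L : ℝ)⁻¹ • had (v k) (onesV d - p k)) :
    1 / Real.exp 1 * f z - f (p (L + 1)) ≤
      ∑ k ∈ Finset.Icc 1 L, (1 - 1 / (L : ℝ)) ^ (L - k) *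
        ⟪(L : ℝ)⁻¹ • had (f' (p k)) (p k - onesV d), v k - z⟫_ℝ + β * R ^ 2 / (2 * L) := by
  set r := 1 - 1 / (L : ℝ)
  have hc := inv_natCast_mem_Icc hL
  have hr : r ∈ Icc (0 : ℝ) 1 := one_sub_one_div_mem_Icc L
  set g : ℕ → ℝ := fun k => ⟪(L : ℝ)⁻¹ • had (f' (p k)) (p k - onesV d), v k - z⟫_ℝ
  set ε := β * R ^ 2 / (2 * L ^ 2)
  have hstep : ∀ k, 1 ≤ k → k ≤ L →
      r * f (p k) + ((L : ℝ)⁻¹ * r ^ (k - 1) * f z - g k - ε) ≤ f (p (k + 1)) := fun k hk hkL => by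
    have hpk := fw_iterate_apply_bounds hc hv hp1 hrec hk (by omega)
    have := hsub.le_apply_fw_step hgrad hnonneg hβ hlip
      (fw_iterate_mem_cube hc hv hp1 hrec hk (by omega)) (hv k hk hkL) hz (hvR k hk hkL) hc
      ⟨pow_nonneg hr.1 _, pow_le_one₀ hr.1 hr.2⟩ (fun i => by simpa [r, one_div] using (hpk i).2)
    rw [← hrec k hk hkL] at this
    convert this using 1
    simp only [g, ε, r, real_inner_smul_left]
    field_simp
    ring
  have hunroll := sum_pow_mul_le_of_mul_add_le hr.1
    (hnonneg _ (fw_iterate_mem_cube hc hv hp1 hrec le_rfl (by omega))) hstep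
  have hmain : ∑ k ∈ Finset.Icc 1 L, r ^ (L - k) * ((L : ℝ)⁻¹ * r ^ (k - 1) * f z)
      = r ^ (L - 1) * f z := by
    simp_rw [fun k => show r ^ (L - k) * ((L : ℝ)⁻¹ * r ^ (k - 1) * f z)
      = (L : ℝ)⁻¹ * f z * (r ^ (L - k) * r ^ (k - 1)) by ring]
    rw [← Finset.mul_sum, sum_Icc_pow_sub_mul_pow_sub_one]
    field_simp
  have herr : ∑ k ∈ Finset.Icc 1 L, r ^ (L - k) * ε ≤ β * R ^ 2 / (2 * L) := by
    refine (Finset.sum_le_card_nsmul _ _ ε fun k _ =>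
      mul_le_of_le_one_left (by positivity) (pow_le_one₀ hr.1 hr.2)).trans_eq ?_
    rw [Nat.card_Icc, Nat.add_sub_cancel, nsmul_eq_mul]
    simp only [ε]
    field_simp
  have hexp := mul_le_mul_of_nonneg_right (one_div_exp_one_le_one_sub_one_div_pow L) (hnonneg z hz)
  simp only [mul_sub, Finset.sum_sub_distrib, hmain] at hunroll
  linarith

end FrankWolfeBound

section ConsensusError

variable {d L : ℕ}

lemma norm_had_sub_one_sub_le {a b p q : EuclideanSpace ℝ (Fin d)} {β G : ℝ} (hp : p ∈ cube d)
    (hab : ‖a - b‖ ≤ β * ‖p - q‖) (hb : ‖b‖ ≤ G) :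
    ‖had a (p - onesV d) - had b (q - onesV d)‖ ≤ (β + G) * ‖p - q‖ := by
  have hdecomp : had a (p - onesV d) - had b (q - onesV d)
      = had (a - b) (p - onesV d) + had b (p - q) := by
    ext i
    simp only [had_apply, PiLp.sub_apply, PiLp.add_apply, onesV_apply]
    ring
  have h1 : ‖had (a - b) (p - onesV d)‖ ≤ ‖a - b‖ :=
    norm_had_le_of_abs_le_one _ fun i => by simpa [abs_sub_comm] using abs_one_sub_le_one (hp i)
  have h2 : ‖had b (p - q)‖ ≤ G * ‖p - q‖ :=
    (norm_had_le b _).trans (mul_le_mul_of_nonneg_right hb (norm_nonneg _))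
  rw [hdecomp, add_mul]
  exact (norm_add_le _ _).trans (add_le_add (h1.trans hab) h2)

lemma norm_inv_smul_sum_had_sub_le (hL : 1 ≤ L)
    {g : Fin L → EuclideanSpace ℝ (Fin d) → EuclideanSpace ℝ (Fin d)} {β G : ℝ}
    (hlip : ∀ s, ∀ y ∈ cube d, ∀ y' ∈ cube d, ‖g s y - g s y'‖ ≤ β * ‖y - y'‖)
    (hbdd : ∀ s, ∀ y ∈ cube d, ‖g s y‖ ≤ G) {p p' : EuclideanSpace ℝ (Fin d)}
    (hp : p ∈ cube d) (hp' : p' ∈ cube d) :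
    ‖(L : ℝ)⁻¹ • ∑ s, had (g s p) (p - onesV d) - (L : ℝ)⁻¹ • ∑ s, had (g s p') (p' - onesV d)‖
      ≤ (β + G) * ‖p - p'‖ := by
  have hL0 : (0 : ℝ) < L := by exact_mod_cast hL
  rw [← smul_sub, ← Finset.sum_sub_distrib, norm_smul, Real.norm_of_nonneg (inv_nonneg.2 hL0.le),
    inv_mul_le_iff₀ hL0]
  refine (norm_sum_le_of_le _ fun s _ =>
    norm_had_sub_one_sub_le hp (hlip s p hp p' hp') (hbdd s p' hp')).trans ?_
  simp

lemma inner_avg_grad_le_add_consensus_error (hL : 1 ≤ L)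
    {g : Fin L → EuclideanSpace ℝ (Fin d) → EuclideanSpace ℝ (Fin d)} {β G R D t : ℝ} (hβ : 0 ≤ β)
    (hlip : ∀ s, ∀ y ∈ cube d, ∀ y' ∈ cube d, ‖g s y - g s y'‖ ≤ β * ‖y - y'‖)
    (hbdd : ∀ s, ∀ y ∈ cube d, ‖g s y‖ ≤ G) {p p' w : EuclideanSpace ℝ (Fin d)}
    (hp : p ∈ cube d) (hp' : p' ∈ cube d) (hpp' : ‖p - p'‖ ≤ D) (hw : ‖w‖ ≤ 2 * R)
    (ht : t ∈ Icc (0 : ℝ) 1) :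
    t * ⟪(L : ℝ)⁻¹ • ∑ s, had (g s p) (p - onesV d), w⟫_ℝ ≤
      t * ⟪(L : ℝ)⁻¹ • ∑ s, had (g s p') (p' - onesV d), w⟫_ℝ + 4 * (β + G) * R * D := by
  have hG : 0 ≤ G := (norm_nonneg _).trans (hbdd ⟨0, hL⟩ 0 zero_mem_cube)
  have hR : 0 ≤ R := by linarith [norm_nonneg w]
  have hD : 0 ≤ D := (norm_nonneg _).trans hpp'
  have hgap := (real_inner_le_norm _ w).trans (mul_le_mul
    ((norm_inv_smul_sum_had_sub_le hL hlip hbdd hp hp').trans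
      (mul_le_mul_of_nonneg_left hpp' (by positivity))) hw (norm_nonneg _) (by positivity))
  rw [inner_sub_left] at hgap
  have hM : 0 ≤ (β + G) * D * (2 * R) := by positivity
  nlinarith [mul_le_mul_of_nonneg_left hgap ht.1, mul_le_of_le_one_left hM ht.2]

end ConsensusError

section Block

variable {d n L : ℕ} {f : Fin L → Fin n → EuclideanSpace ℝ (Fin d) → ℝ}
  {f' : Fin L → Fin n → EuclideanSpace ℝ (Fin d) → EuclideanSpace ℝ (Fin d)} {β R : ℝ}

theorem frank_wolfe_sum_bound (hL : 1 ≤ L) (hβ : 0 ≤ β)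
    (hsub : ∀ s j, DRSubmodularOn d (f s j))
    (hnonneg : ∀ s j, ∀ y ∈ cube d, 0 ≤ f s j y)
    (hgrad : ∀ s j, ∀ y ∈ cube d, HasGradientWithinAt (f s j) (f' s j y) (cube d) y)
    (hlip : ∀ s j, ∀ y ∈ cube d, ∀ y' ∈ cube d, ‖f' s j y - f' s j y'‖ ≤ β * ‖y - y'‖)
    {v p : ℕ → EuclideanSpace ℝ (Fin d)}
    (hv : ∀ k, 1 ≤ k → k ≤ L → v k ∈ cube d) (hvR : ∀ k, 1 ≤ k → k ≤ L → ‖v k‖ ≤ R)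
    (hp1 : p 1 = 0)
    (hrec : ∀ k, 1 ≤ k → k ≤ L → p (k + 1) = p k + (L : ℝ)⁻¹ • had (v k) (onesV d - p k))
    {x : EuclideanSpace ℝ (Fin d)} (hx : x ∈ cube d) :
    ∑ s, (1 / Real.exp 1 * ∑ j, f s j x - ∑ j, f s j (p (L + 1))) ≤
      ∑ k ∈ Finset.Icc 1 L, ∑ j, (1 - 1 / (L : ℝ)) ^ (L - k) *
        ⟪(L : ℝ)⁻¹ • ∑ s, had (f' s j (p k)) (p k - onesV d), v k - x⟫_ℝ + n * β * R ^ 2 / 2 := by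
  calc ∑ s, (1 / Real.exp 1 * ∑ j, f s j x - ∑ j, f s j (p (L + 1)))
      = ∑ s, ∑ j, (1 / Real.exp 1 * f s j x - f s j (p (L + 1))) := by
        simp only [Finset.mul_sum, Finset.sum_sub_distrib]
    _ ≤ ∑ s, ∑ j, (∑ k ∈ Finset.Icc 1 L, (1 - 1 / (L : ℝ)) ^ (L - k) *
          ⟪(L : ℝ)⁻¹ • had (f' s j (p k)) (p k - onesV d), v k - x⟫_ℝ + β * R ^ 2 / (2 * L)) := by
        gcongr with s _ j _
        exact (hsub s j).frank_wolfe_bound (hgrad s j) (hnonneg s j) hβ (hlip s j) hL hv hvR hx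
          hp1 hrec
    _ = _ := by
        simp only [Finset.sum_add_distrib, Finset.smul_sum, sum_inner, Finset.mul_sum,
          Finset.sum_const, Finset.card_univ, Fintype.card_fin, nsmul_eq_mul]
        congr 1
        · exact (Finset.sum_congr rfl fun _ _ => Finset.sum_comm).trans
            (Finset.sum_comm.trans (Finset.sum_congr rfl fun _ _ => Finset.sum_comm))
        · field_simp

theorem meta_frank_wolfe_block_bound (hd : 1 ≤ d) (hL : 1 ≤ L) {G : ℝ}
    (hsub : ∀ s j, DRSubmodularOn d (f s j))
    (hnonneg : ∀ s j, ∀ y ∈ cube d, 0 ≤ f s j y)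
    (hgrad : ∀ s j, ∀ y ∈ cube d, HasGradientWithinAt (f s j) (f' s j y) (cube d) y)
    (hlip : ∀ s j, ∀ y ∈ cube d, ∀ y' ∈ cube d, ‖f' s j y - f' s j y'‖ ≤ β * ‖y - y'‖)
    (hbdd : ∀ s j, ∀ y ∈ cube d, ‖f' s j y‖ ≤ G) {v xs : Fin n → ℕ → EuclideanSpace ℝ (Fin d)}
    (hv : ∀ j k, 1 ≤ k → k ≤ L → v j k ∈ cube d) (hvR : ∀ j k, 1 ≤ k → k ≤ L → ‖v j k‖ ≤ R)
    (hxs1 : ∀ j, xs j 1 = 0)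
    (hrec : ∀ j k, 1 ≤ k → k ≤ L →
      xs j (k + 1) = xs j k + (L : ℝ)⁻¹ • had (v j k) (onesV d - xs j k))
    (i : Fin n) {x : EuclideanSpace ℝ (Fin d)} (hx : x ∈ cube d) (hxR : ‖x‖ ≤ R) :
    ∑ s, (1 / Real.exp 1 * ∑ j, f s j x - ∑ j, f s j (xs i (L + 1))) ≤
      ∑ k ∈ Finset.Icc 1 L, (1 - 1 / (L : ℝ)) ^ (L - k) *
        ∑ j, ⟪(L : ℝ)⁻¹ • ∑ s, had (f' s j (xs j k)) (xs j k - onesV d), v i k - x⟫_ℝ +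
      4 * (β + G) * R * ∑ k ∈ Finset.Icc 1 L, ∑ j, ‖v j k - v i k‖ + n * β * R ^ 2 / 2 := by
  have hc := inv_natCast_mem_Icc hL
  have hr := one_sub_one_div_mem_Icc L
  have hβ : 0 ≤ β := nonneg_of_lipschitz_on_cube hd (hlip ⟨0, hL⟩ i)
  have hmem : ∀ j k, 1 ≤ k → k ≤ L + 1 → xs j k ∈ cube d := fun j k =>
    fw_iterate_mem_cube hc (hv j) (hxs1 j) (hrec j)
  set D : Fin n → ℝ := fun j => (L : ℝ)⁻¹ * ∑ l ∈ Finset.Icc 1 L, ‖v j l - v i l‖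
  have hdrift : ∀ j, ∀ k ∈ Finset.Icc 1 L, ‖xs i k - xs j k‖ ≤ D j := fun j k hk => by
    obtain ⟨hk1, hkL⟩ := Finset.mem_Icc.1 hk
    refine (norm_fw_iterate_sub_le hc (hv i) (hv j) (hxs1 i) (hxs1 j) (hrec i) (hrec j) hk1
      (by omega)).trans (mul_le_mul_of_nonneg_left ?_ hc.1)
    simp_rw [norm_sub_rev (v i _)]
    exact Finset.sum_le_sum_of_subset_of_nonneg (fun l hl => by grind) fun _ _ _ => norm_nonneg _
  have hcons : ∑ k ∈ Finset.Icc 1 L, ∑ j, 4 * (β + G) * R * D j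
      = 4 * (β + G) * R * ∑ k ∈ Finset.Icc 1 L, ∑ j, ‖v j k - v i k‖ := by
    simp only [D, Finset.sum_const, Nat.card_Icc, Nat.add_sub_cancel, nsmul_eq_mul,
      ← Finset.mul_sum]
    rw [Finset.sum_comm (s := Finset.Icc 1 L)]
    field_simp
  refine (frank_wolfe_sum_bound hL hβ hsub hnonneg hgrad hlip (hv i) (hvR i) (hxs1 i) (hrec i)
    hx).trans ?_
  -- In the gradients, replace learner `i`'s iterates by learner `j`'s.
  calc _ ≤ ∑ k ∈ Finset.Icc 1 L, ∑ j, ((1 - 1 / (L : ℝ)) ^ (L - k) *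
          ⟪(L : ℝ)⁻¹ • ∑ s, had (f' s j (xs j k)) (xs j k - onesV d), v i k - x⟫_ℝ +
            4 * (β + G) * R * D j) + n * β * R ^ 2 / 2 := by
        gcongr with k hk j _
        obtain ⟨hk1, hkL⟩ := Finset.mem_Icc.1 hk
        exact inner_avg_grad_le_add_consensus_error hL hβ (hlip · j) (hbdd · j)
          (hmem i k hk1 (by omega)) (hmem j k hk1 (by omega)) (hdrift j k hk)
          ((norm_sub_le _ _).trans (by linarith [hvR i k hk1 hkL]))
          ⟨pow_nonneg hr.1 _, pow_le_one₀ hr.1 hr.2⟩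
    _ = _ := by simp only [Finset.sum_add_distrib, hcons, Finset.mul_sum]

end Block

/-- Step `t` of the paper is encoded as block `q : Fin Q` and position `s : Fin L`
(`t = qL + s + 1`); `v q j k` is learner `j`'s `k`-th direction in block `q`, and
`xs q j (L + 1)` is its decision for that block. -/
theorem decentralized_meta_frank_wolfe_reduction_general
    (d n Q L : ℕ) (hd : 1 ≤ d) (hL : 1 ≤ L)
    (K : Set (EuclideanSpace ℝ (Fin d))) (hKX : K ⊆ cube d)
    (R : ℝ) (hR : ∀ y ∈ K, ‖y‖ ≤ R)
    (β G : ℝ)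
    (f : Fin Q → Fin L → Fin n → EuclideanSpace ℝ (Fin d) → ℝ)
    (f' : Fin Q → Fin L → Fin n → EuclideanSpace ℝ (Fin d) → EuclideanSpace ℝ (Fin d))
    (hsub : ∀ q s j, DRSubmodularOn d (f q s j))
    (hnonneg : ∀ q s j, ∀ y ∈ cube d, 0 ≤ f q s j y)
    (hgrad : ∀ q s j, ∀ y ∈ cube d, HasGradientWithinAt (f q s j) (f' q s j y) (cube d) y)
    (hlip : ∀ q s j, ∀ y ∈ cube d, ∀ y' ∈ cube d,
      ‖f' q s j y - f' q s j y'‖ ≤ β * ‖y - y'‖)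
    (hbdd : ∀ q s j, ∀ y ∈ cube d, ‖f' q s j y‖ ≤ G)
    (v : Fin Q → Fin n → ℕ → EuclideanSpace ℝ (Fin d))
    (hv : ∀ q j k, 1 ≤ k → k ≤ L → v q j k ∈ K)
    (xs : Fin Q → Fin n → ℕ → EuclideanSpace ℝ (Fin d))
    (hxs1 : ∀ q j, xs q j 1 = 0)
    (hrec : ∀ q j k, 1 ≤ k → k ≤ L →
      xs q j (k + 1) = xs q j k + (L : ℝ)⁻¹ • had (v q j k) (onesV d - xs q j k)) :
    ∀ i : Fin n, ∀ x ∈ K,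
      (∑ q, ∑ s, ((1 / Real.exp 1) * (∑ j, f q s j x) - ∑ j, f q s j (xs q i (L + 1)))) ≤
        (∑ k ∈ Finset.Icc 1 L, (1 - 1 / (L : ℝ)) ^ (L - k) *
          ∑ q, ∑ j,
            (inner ℝ ((L : ℝ)⁻¹ •
                ∑ s, had (f' q s j (xs q j k)) (xs q j k - onesV d))
              (v q i k - x) : ℝ)) +
        4 * (β + G) * R *
          (∑ k ∈ Finset.Icc 1 L, ∑ q, ∑ j, ‖v q j k - v q i k‖) +
        (n : ℝ) * β * ((Q : ℝ) * (L : ℝ)) * R ^ 2 / (2 * (L : ℝ)) := by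
  intro i x hx
  refine (Finset.sum_le_sum fun q _ => meta_frank_wolfe_block_bound hd hL (hsub q) (hnonneg q)
    (hgrad q) (hlip q) (hbdd q) (fun j k hk hkL => hKX (hv q j k hk hkL))
    (fun j k hk hkL => hR _ (hv q j k hk hkL)) (hxs1 q) (hrec q) i (hKX hx) (hR x hx)).trans_eq ?_
  simp only [Finset.sum_add_distrib, Finset.mul_sum, Finset.sum_const, Finset.card_univ,
    Fintype.card_fin, nsmul_eq_mul]
  rw [Finset.sum_comm (s := Finset.univ (α := Fin Q)),
    Finset.sum_comm (s := Finset.univ (α := Fin Q))]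
  field_simp

/-- deterministic core of Theorem 4: the decentralized
Meta-Frank-Wolfe reduction. Time steps are indexed by blocks `q ∈ Fin Q` and positions
`s ∈ Fin L` within a block (so `t = (q-1)L + s` and `T = QL`); `f q s j` is the reward
function of learner `j` at the `s`-th round of block `q`, `v q j k` is the `k`-th update
direction of learner `j` in block `q`, and `xs q j k` are the local Frank–Wolfe iterates
with final decision `xs q j (L+1)`. -/
theorem decentralized_meta_frank_wolfe_reduction
    (d n Q L : ℕ) (hd : 1 ≤ d) (hn : 1 ≤ n) (hQ : 1 ≤ Q) (hL : 1 ≤ L)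
    (K : Set (EuclideanSpace ℝ (Fin d))) (hKcvx : Convex ℝ K) (hKX : K ⊆ cube d)
    (h0K : (0 : EuclideanSpace ℝ (Fin d)) ∈ K) (hdc : DownwardClosed d K)
    (R : ℝ) (hR : ∀ y ∈ K, ‖y‖ ≤ R)
    (β G : ℝ)
    (f : Fin Q → Fin L → Fin n → EuclideanSpace ℝ (Fin d) → ℝ)
    (f' : Fin Q → Fin L → Fin n → EuclideanSpace ℝ (Fin d) → EuclideanSpace ℝ (Fin d))
    (hsub : ∀ q s j, DRSubmodularOn d (f q s j))
    (hnonneg : ∀ q s j, ∀ y ∈ cube d, 0 ≤ f q s j y)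
    (hgrad : ∀ q s j, ∀ y ∈ cube d, HasGradientWithinAt (f q s j) (f' q s j y) (cube d) y)
    (hlip : ∀ q s j, ∀ y ∈ cube d, ∀ y' ∈ cube d,
      ‖f' q s j y - f' q s j y'‖ ≤ β * ‖y - y'‖)
    (hbdd : ∀ q s j, ∀ y ∈ cube d, ‖f' q s j y‖ ≤ G)
    (v : Fin Q → Fin n → ℕ → EuclideanSpace ℝ (Fin d))
    (hv : ∀ q j k, 1 ≤ k → k ≤ L → v q j k ∈ K)
    (xs : Fin Q → Fin n → ℕ → EuclideanSpace ℝ (Fin d))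
    (hxs1 : ∀ q j, xs q j 1 = 0)
    (hrec : ∀ q j k, 1 ≤ k → k ≤ L →
      xs q j (k + 1) = xs q j k + (L : ℝ)⁻¹ • had (v q j k) (onesV d - xs q j k)) :
    ∀ i : Fin n, ∀ x ∈ K,
      (∑ q, ∑ s, ((1 / Real.exp 1) * (∑ j, f q s j x) - ∑ j, f q s j (xs q i (L + 1)))) ≤
        (∑ k ∈ Finset.Icc 1 L, (1 - 1 / (L : ℝ)) ^ (L - k) *
          ∑ q, ∑ j,
            (inner ℝ ((L : ℝ)⁻¹ •
                ∑ s, had (f' q s j (xs q j k)) (xs q j k - onesV d))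
              (v q i k - x) : ℝ)) +
        4 * (β + G) * R *
          (∑ k ∈ Finset.Icc 1 L, ∑ q, ∑ j, ‖v q j k - v q i k‖) +
        (n : ℝ) * β * ((Q : ℝ) * (L : ℝ)) * R ^ 2 / (2 * (L : ℝ)) :=
  decentralized_meta_frank_wolfe_reduction_general d n Q L hd hL K hKX R hR β G f f' hsub hnonneg
    hgrad hlip hbdd v hv xs hxs1 hrec
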